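/- Single-letterization of a conditional mutual information term: if (S_i, Z_i, Y_i)_{i=1}^n are finite random variables such that for each i the Markov chain (Y^{i−1}, Z^{n∖i}, S^{n∖i}) − (S_i, Z_i) − Y_i holds, then I(S^n; Y^n | Z^n) ≤ Σ_{i=1}^n I(S_i; Y_i | Z_i). -/
import Mathlib


open Finset

variable {Ω : Type*} [Fintype Ω]

/-- Probability that the random variable `X` takes value `a`, under pmf `μ`. -/
noncomputable def pr {α : Type*} [DecidableEq α] (μ : Ω → ℝ) (X : Ω → α) (a : α) : ℝ :=
  ∑ ω, if X ω = a then μ ω else 0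

/-- `μ` is a probability mass function. -/
def IsPMF (μ : Ω → ℝ) : Prop := (∀ ω, 0 ≤ μ ω) ∧ ∑ ω, μ ω = 1

/-- Shannon entropy of the random variable `X`. -/
noncomputable def ent {α : Type*} [Fintype α] [DecidableEq α] (μ : Ω → ℝ) (X : Ω → α) : ℝ :=
  -∑ a, pr μ X a * Real.log (pr μ X a)

/-- Conditional entropy H(X|Y). -/
noncomputable def condEnt {α β : Type*} [Fintype α] [DecidableEq α] [Fintype β] [DecidableEq β]
    (μ : Ω → ℝ) (X : Ω → α) (Y : Ω → β) : ℝ :=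
  ent μ (fun ω => (X ω, Y ω)) - ent μ Y

/-- Mutual information I(X;Y). -/
noncomputable def mi {α β : Type*} [Fintype α] [DecidableEq α] [Fintype β] [DecidableEq β]
    (μ : Ω → ℝ) (X : Ω → α) (Y : Ω → β) : ℝ :=
  ent μ X + ent μ Y - ent μ (fun ω => (X ω, Y ω))

/-- Conditional mutual information I(X;Y|Z). -/
noncomputable def cmi {α β γ : Type*} [Fintype α] [DecidableEq α] [Fintype β] [DecidableEq β]
    [Fintype γ] [DecidableEq γ] (μ : Ω → ℝ) (X : Ω → α) (Y : Ω → β) (Z : Ω → γ) : ℝ :=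
  condEnt μ X Z + condEnt μ Y Z - condEnt μ (fun ω => (X ω, Y ω)) Z

/-- Markov chain A − B − C: A and C are conditionally independent given B. -/
def MarkovChain {α β γ : Type*} [DecidableEq α] [DecidableEq β] [DecidableEq γ]
    (μ : Ω → ℝ) (A : Ω → α) (B : Ω → β) (C : Ω → γ) : Prop :=
  ∀ a b c, pr μ (fun ω => (A ω, B ω, C ω)) (a, b, c) * pr μ B b =
    pr μ (fun ω => (A ω, B ω)) (a, b) * pr μ (fun ω => (C ω, B ω)) (c, b)

section AuxLemmas

variable {α β γ : Type*} [Fintype α] [DecidableEq α] [Fintype β] [DecidableEq β]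
    [Fintype γ] [DecidableEq γ]
variable {μ : Ω → ℝ}

lemma pr_nonneg (hμ : IsPMF μ) (X : Ω → α) (a : α) : 0 ≤ pr μ X a :=
  Finset.sum_nonneg fun ω _ => by by_cases h : X ω = a <;> simp [pr, h, hμ.1 ω]

lemma le_pr_self (hμ : IsPMF μ) (X : Ω → α) (ω : Ω) : μ ω ≤ pr μ X (X ω) := by
  have := Finset.single_le_sum (f := fun ω' => if X ω' = X ω then μ ω' else 0)
    (fun ω' _ => by by_cases h : X ω' = X ω <;> simp [h, hμ.1 ω']) (Finset.mem_univ ω)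
  simpa [pr] using this

lemma pr_congr {X : Ω → α} {X' : Ω → β} {a : α} {b : β} (h : ∀ ω, X ω = a ↔ X' ω = b) :
    pr μ X a = pr μ X' b :=
  Finset.sum_congr rfl fun ω _ => by rw [if_congr (h ω) rfl rfl]

lemma pr_mono (hμ : IsPMF μ) {X : Ω → α} {W : Ω → β} {a : α} {w : β}
    (h : ∀ ω, X ω = a → W ω = w) : pr μ X a ≤ pr μ W w :=
  Finset.sum_le_sum fun ω _ => by
    by_cases hx : X ω = a
    · simp [hx, h ω hx]
    · by_cases hw : W ω = w <;> simp [hx, hw, hμ.1 ω]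

lemma sum_pr_mul (X : Ω → α) (f : α → ℝ) :
    ∑ a, pr μ X a * f a = ∑ ω, μ ω * f (X ω) := by
  unfold pr
  simp_rw [Finset.sum_mul, ite_mul, zero_mul]
  rw [Finset.sum_comm]
  simp [Finset.sum_ite_eq]

lemma sum_pr (hμ : IsPMF μ) (X : Ω → α) : ∑ a, pr μ X a = 1 := by
  have := sum_pr_mul (μ := μ) X (fun _ => 1)
  simpa [hμ.2] using this

lemma ent_eq (X : Ω → α) : ent μ X = -∑ ω, μ ω * Real.log (pr μ X (X ω)) := by
  rw [ent, sum_pr_mul X (fun a => Real.log (pr μ X a))]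

lemma ent_congr {X : Ω → α} {X' : Ω → β} (h : ∀ ω ω', X ω = X ω' ↔ X' ω = X' ω') :
    ent μ X = ent μ X' := by
  rw [ent_eq, ent_eq]
  congr 1
  apply Finset.sum_congr rfl
  intro ω _
  rw [pr_congr (fun ω' => h ω' ω)]

lemma condEnt_eq (X : Ω → α) (W : Ω → β) :
    condEnt μ X W = -∑ ω, μ ω *
      (Real.log (pr μ (fun ω' => (X ω', W ω')) (X ω, W ω)) - Real.log (pr μ W (W ω))) := by
  rw [condEnt, ent_eq, ent_eq]
  simp only [mul_sub, Finset.sum_sub_distrib]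
  ring

lemma condEnt_congr_right {X : Ω → α} {W : Ω → β} {W' : Ω → γ}
    (h : ∀ ω ω', W ω = W ω' ↔ W' ω = W' ω') : condEnt μ X W = condEnt μ X W' := by
  unfold condEnt
  rw [ent_congr (X := W) (X' := W') h,
    ent_congr (X := fun ω => (X ω, W ω)) (X' := fun ω => (X ω, W' ω))
      (by intro ω ω'; simp only [Prod.mk.injEq, h ω ω'])]

lemma condEnt_congr_left {X : Ω → α} {X' : Ω → β} {W : Ω → γ}
    (h : ∀ ω ω', X ω = X ω' ↔ X' ω = X' ω') : condEnt μ X W = condEnt μ X' W := by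
  unfold condEnt
  rw [ent_congr (X := fun ω => (X ω, W ω)) (X' := fun ω => (X' ω, W ω))
      (by intro ω ω'; simp only [Prod.mk.injEq, h ω ω'])]

end AuxLemmas

set_option linter.unusedSectionVars false

section Submodular

variable {α β γ : Type*} [Fintype α] [DecidableEq α] [Fintype β] [DecidableEq β]
    [Fintype γ] [DecidableEq γ]
variable {μ : Ω → ℝ}

lemma marg_fst (X : Ω → α) (V : Ω → γ) (v : γ) :
    ∑ x, pr μ (fun ω => (X ω, V ω)) (x, v) = pr μ V v := by
  unfold pr
  rw [Finset.sum_comm]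
  apply Finset.sum_congr rfl
  intro ω _
  by_cases h : V ω = v
  · simp [Prod.ext_iff, h, Finset.sum_ite_eq]
  · simp [Prod.ext_iff, h]

lemma condEnt_pair_le (hμ : IsPMF μ) (X : Ω → α) (U : Ω → β) (V : Ω → γ) :
    condEnt μ X (fun ω => (U ω, V ω)) ≤ condEnt μ X V := by
  set T : Ω → α × β × γ := fun ω => (X ω, U ω, V ω) with hT
  set p3 : α × β × γ → ℝ := fun t => pr μ T t with hp3
  set pUV : β × γ → ℝ := fun t => pr μ (fun ω => (U ω, V ω)) t with hpUV
  set pXV : α × γ → ℝ := fun t => pr μ (fun ω => (X ω, V ω)) t with hpXV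
  set pV : γ → ℝ := fun v => pr μ V v with hpV
  set f : α × β × γ → ℝ :=
    fun t => pXV (t.1, t.2.2) * pUV t.2 / (pV t.2.2 * p3 t) with hf
  rw [condEnt_eq, condEnt_eq, neg_le_neg_iff]
  -- goal : ∑ ω, μ ω * (log pXV - log pV) ≤ ∑ ω, μ ω * (log p3 - log pUV)
  have key : ∀ ω, μ ω * (Real.log (pXV (X ω, V ω)) - Real.log (pV (V ω)))
      - μ ω * (Real.log (p3 (T ω)) - Real.log (pUV (U ω, V ω)))
      ≤ μ ω * f (T ω) - μ ω := by
    intro ω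
    by_cases hω : μ ω = 0
    · simp [hω]
    have hμω : 0 < μ ω := (hμ.1 ω).lt_of_ne (Ne.symm hω)
    have h3 : 0 < p3 (T ω) := lt_of_lt_of_le hμω (le_pr_self hμ T ω)
    have hxv : 0 < pXV (X ω, V ω) :=
      lt_of_lt_of_le hμω (le_pr_self hμ (fun ω' => (X ω', V ω')) ω)
    have huv : 0 < pUV (U ω, V ω) :=
      lt_of_lt_of_le hμω (le_pr_self hμ (fun ω' => (U ω', V ω')) ω)
    have hv : 0 < pV (V ω) := lt_of_lt_of_le hμω (le_pr_self hμ V ω)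
    have hfpos : 0 < f (T ω) := by
      have : f (T ω) = pXV (X ω, V ω) * pUV (U ω, V ω) / (pV (V ω) * p3 (T ω)) := rfl
      rw [this]; positivity
    have hlog : Real.log (pXV (X ω, V ω)) - Real.log (pV (V ω))
        - (Real.log (p3 (T ω)) - Real.log (pUV (U ω, V ω))) = Real.log (f (T ω)) := by
      have : f (T ω) = pXV (X ω, V ω) * pUV (U ω, V ω) / (pV (V ω) * p3 (T ω)) := rfl
      rw [this, Real.log_div (by positivity) (by positivity),
        Real.log_mul hxv.ne' huv.ne', Real.log_mul hv.ne' h3.ne']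
      ring
    have hle := Real.log_le_sub_one_of_pos hfpos
    have := mul_le_mul_of_nonneg_left hle hμω.le
    nlinarith [this]
  have sum1 : ∑ ω, (μ ω * f (T ω) - μ ω) = (∑ ω, μ ω * f (T ω)) - 1 := by
    rw [Finset.sum_sub_distrib, hμ.2]
  have sum2 : ∑ ω, μ ω * f (T ω) ≤ 1 := by
    rw [← sum_pr_mul T f]
    have bound1 : ∀ t : α × β × γ,
        pr μ T t * f t ≤ pXV (t.1, t.2.2) * pUV t.2 / pV t.2.2 := by
      intro t
      by_cases h3 : p3 t = 0
      · have : pr μ T t = 0 := h3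
        rw [this, zero_mul]
        have := pr_nonneg hμ (fun ω => (X ω, V ω)) (t.1, t.2.2)
        have := pr_nonneg hμ (fun ω => (U ω, V ω)) t.2
        have := pr_nonneg hμ V t.2.2
        positivity
      · have h3' : 0 < p3 t := (pr_nonneg hμ T t).lt_of_ne (Ne.symm h3)
        have hv : 0 < pV t.2.2 := lt_of_lt_of_le h3'
          (pr_mono hμ (fun ω hh => by rw [← hh]))
        have : pr μ T t * f t = p3 t * (pXV (t.1, t.2.2) * pUV t.2 / (pV t.2.2 * p3 t)) := rfl
        rw [this]
        rw [show p3 t * (pXV (t.1, t.2.2) * pUV t.2 / (pV t.2.2 * p3 t))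
            = pXV (t.1, t.2.2) * pUV t.2 / pV t.2.2 by field_simp]
    calc ∑ t : α × β × γ, pr μ T t * f t
        ≤ ∑ t : α × β × γ, pXV (t.1, t.2.2) * pUV t.2 / pV t.2.2 :=
          Finset.sum_le_sum fun t _ => bound1 t
      _ = ∑ v, (∑ x, pXV (x, v)) * (∑ u, pUV (u, v)) / pV v := by
          rw [Fintype.sum_prod_type]
          simp_rw [Fintype.sum_prod_type]
          calc ∑ x : α, ∑ u : β, ∑ v : γ, pXV (x, v) * pUV (u, v) / pV v
              = ∑ x : α, ∑ v : γ, ∑ u : β, pXV (x, v) * pUV (u, v) / pV v := by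
                exact Finset.sum_congr rfl fun x _ => Finset.sum_comm
            _ = ∑ v : γ, ∑ x : α, ∑ u : β, pXV (x, v) * pUV (u, v) / pV v := by
                exact Finset.sum_comm
            _ = ∑ v : γ, (∑ x, pXV (x, v)) * (∑ u, pUV (u, v)) / pV v := by
                apply Finset.sum_congr rfl
                intro v _
                simp_rw [div_eq_mul_inv, ← Finset.sum_mul, ← Finset.mul_sum]
                rw [← Finset.sum_mul]
      _ ≤ ∑ v, pV v := by
          apply Finset.sum_le_sum
          intro v _
          rw [marg_fst X V v, marg_fst U V v]
          by_cases h : pV v = 0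
          · simp [h]
          · rw [mul_div_assoc, div_self h, mul_one]
      _ = 1 := sum_pr hμ V
  calc ∑ ω, μ ω * (Real.log (pXV (X ω, V ω)) - Real.log (pV (V ω)))
      ≤ ∑ ω, (μ ω * (Real.log (p3 (T ω)) - Real.log (pUV (U ω, V ω))) + (μ ω * f (T ω) - μ ω)) := by
        apply Finset.sum_le_sum
        intro ω _
        have := key ω
        linarith
    _ = (∑ ω, μ ω * (Real.log (p3 (T ω)) - Real.log (pUV (U ω, V ω)))) + ((∑ ω, μ ω * f (T ω)) - 1) := by
        rw [Finset.sum_add_distrib, sum1]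
    _ ≤ ∑ ω, μ ω * (Real.log (p3 (T ω)) - Real.log (pUV (U ω, V ω))) := by linarith

end Submodular

section Markov

variable {α β γ : Type*} [Fintype α] [DecidableEq α] [Fintype β] [DecidableEq β]
    [Fintype γ] [DecidableEq γ]
variable {μ : Ω → ℝ}

lemma condEnt_comp_le (hμ : IsPMF μ) (X : Ω → α) (W : Ω → β) (f : β → γ) :
    condEnt μ X W ≤ condEnt μ X (fun ω => f (W ω)) := by
  have h1 : condEnt μ X W = condEnt μ X (fun ω => (W ω, f (W ω))) := by
    apply condEnt_congr_right
    intro ω ω'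
    constructor
    · intro h; simp [h]
    · intro h; exact (Prod.mk.injEq .. ▸ h : _ ∧ _).1
  rw [h1]
  exact condEnt_pair_le hμ X W (fun ω => f (W ω))

lemma condEnt_markov (hμ : IsPMF μ) {A : Ω → α} {B : Ω → β} {C : Ω → γ}
    (h : MarkovChain μ A B C) :
    condEnt μ C (fun ω => (A ω, B ω)) = condEnt μ C B := by
  rw [condEnt_eq, condEnt_eq]
  congr 1
  apply Finset.sum_congr rfl
  intro ω _
  by_cases hω : μ ω = 0
  · simp [hω]
  have hμω : 0 < μ ω := (hμ.1 ω).lt_of_ne (Ne.symm hω)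
  have h3pos : 0 < pr μ (fun ω' => (A ω', B ω', C ω')) (A ω, B ω, C ω) :=
    lt_of_lt_of_le hμω (le_pr_self hμ _ ω)
  have habpos : 0 < pr μ (fun ω' => (A ω', B ω')) (A ω, B ω) :=
    lt_of_lt_of_le hμω (le_pr_self hμ _ ω)
  have hbpos : 0 < pr μ B (B ω) := lt_of_lt_of_le hμω (le_pr_self hμ B ω)
  have hcbpos : 0 < pr μ (fun ω' => (C ω', B ω')) (C ω, B ω) :=
    lt_of_lt_of_le hμω (le_pr_self hμ _ ω)
  have hmc := h (A ω) (B ω) (C ω)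
  have hpr1 : pr μ (fun ω' => (C ω', (A ω', B ω'))) (C ω, (A ω, B ω))
      = pr μ (fun ω' => (A ω', B ω', C ω')) (A ω, B ω, C ω) := by
    apply pr_congr
    intro ω'
    simp only [Prod.mk.injEq]
    tauto
  rw [hpr1]
  have hlogs : Real.log (pr μ (fun ω' => (A ω', B ω', C ω')) (A ω, B ω, C ω))
      - Real.log (pr μ (fun ω' => (A ω', B ω')) (A ω, B ω))
      = Real.log (pr μ (fun ω' => (C ω', B ω')) (C ω, B ω)) - Real.log (pr μ B (B ω)) := by
    have := congrArg Real.log hmc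
    rw [Real.log_mul h3pos.ne' hbpos.ne', Real.log_mul habpos.ne' hcbpos.ne'] at this
    linarith
  rw [hlogs]

lemma cmi_eq (X : Ω → α) (Y : Ω → β) (Z : Ω → γ) :
    cmi μ X Y Z = condEnt μ Y Z - condEnt μ Y (fun ω => (X ω, Z ω)) := by
  have hsplit : ent μ (fun ω => ((X ω, Y ω), Z ω)) = ent μ (fun ω => (Y ω, (X ω, Z ω))) := by
    apply ent_congr
    intro ω ω'
    simp only [Prod.mk.injEq]
    tauto
  unfold cmi condEnt
  rw [hsplit]
  ring

end Markov

section Telescope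

variable {𝒴 γ : Type*} [Fintype 𝒴] [DecidableEq 𝒴] [Fintype γ] [DecidableEq γ]
variable {μ : Ω → ℝ}

lemma condEnt_telescope (n : ℕ) (Y : Ω → Fin n → 𝒴) (W : Ω → γ) :
    condEnt μ Y W = ∑ i : Fin n, condEnt μ (fun ω => Y ω i)
      (fun ω => ((fun j : Fin n => if (j : ℕ) < (i : ℕ) then some (Y ω j) else none), W ω)) := by
  set A : ℕ → Ω → (Fin n → Option 𝒴) :=
    fun k ω j => if (j : ℕ) < k then some (Y ω j) else none with hA
  set F : ℕ → ℝ := fun k => ent μ (fun ω => (A k ω, W ω)) with hF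
  have hstep : ∀ i : Fin n, condEnt μ (fun ω => Y ω i) (fun ω => (A (i : ℕ) ω, W ω))
      = F ((i : ℕ) + 1) - F (i : ℕ) := by
    intro i
    rw [condEnt]
    congr 1
    apply ent_congr
    intro ω ω'
    simp only [Prod.mk.injEq]
    constructor
    · rintro ⟨hy, ha, hw⟩
      refine ⟨funext fun j => ?_, hw⟩
      simp only [hA]
      by_cases hj : (j : ℕ) < (i : ℕ) + 1
      · simp only [hj, if_pos]
        by_cases hj' : (j : ℕ) < (i : ℕ)
        · have := congrFun ha j
          simp only [hA, hj', if_pos] at this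
          exact this
        · have hji : j = i := Fin.ext (by omega)
          rw [hji, hy]
      · simp [hj]
    · rintro ⟨ha, hw⟩
      refine ⟨?_, funext fun j => ?_, hw⟩
      · have := congrFun ha i
        simp only [hA, Nat.lt_succ_self, if_pos, Option.some.injEq] at this
        exact this
      · simp only [hA]
        by_cases hj' : (j : ℕ) < (i : ℕ)
        · have := congrFun ha j
          have hj : (j : ℕ) < (i : ℕ) + 1 := by omega
          simp only [hA, hj, if_pos, Option.some.injEq] at this
          simp [hj', this]
        · simp [hj']
  have main : condEnt μ Y W
      = ∑ i : Fin n, condEnt μ (fun ω => Y ω i) (fun ω => (A (i : ℕ) ω, W ω)) := by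
    have hsum : ∑ i : Fin n, (F ((i : ℕ) + 1) - F (i : ℕ)) = F n - F 0 := by
      rw [Fin.sum_univ_eq_sum_range (fun k => F (k + 1) - F k) n]
      exact Finset.sum_range_sub F n
    rw [Finset.sum_congr rfl (fun i _ => hstep i), hsum]
    have hFn : F n = ent μ (fun ω => (Y ω, W ω)) := by
      apply ent_congr
      intro ω ω'
      simp only [Prod.mk.injEq]
      constructor
      · rintro ⟨ha, hw⟩
        refine ⟨funext fun j => ?_, hw⟩
        have := congrFun ha j
        simp only [hA, j.isLt, if_pos, Option.some.injEq] at this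
        exact this
      · rintro ⟨hy, hw⟩
        exact ⟨funext fun j => by simp [hA, hy], hw⟩
    have hF0 : F 0 = ent μ W := by
      apply ent_congr
      intro ω ω'
      simp [hA, Prod.mk.injEq]
    rw [hFn, hF0, condEnt]
  exact main

end Telescope

set_option synthInstance.maxSize 512
set_option synthInstance.maxHeartbeats 1000000
set_option maxHeartbeats 1000000


/-- Single-letterization of I(S^n;Y^n|Z^n). -/
theorem single_letterization {𝒮 𝒴 𝒵 : Type*}
    [Fintype 𝒮] [DecidableEq 𝒮] [Fintype 𝒴] [DecidableEq 𝒴] [Fintype 𝒵] [DecidableEq 𝒵]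
    (n : ℕ) (μ : Ω → ℝ) (hμ : IsPMF μ)
    (S : Ω → Fin n → 𝒮) (Y : Ω → Fin n → 𝒴) (Z : Ω → Fin n → 𝒵)
    (hmc : ∀ i : Fin n, MarkovChain μ
      (fun ω => ((fun j : Fin n => if (j : ℕ) < (i : ℕ) then some (Y ω j) else none),
                 (fun j : Fin n => if j = i then none else some (Z ω j)),
                 (fun j : Fin n => if j = i then none else some (S ω j))))
      (fun ω => (S ω i, Z ω i))
      (fun ω => Y ω i)) :
    cmi μ S Y Z ≤
      ∑ i : Fin n, cmi μ (fun ω => S ω i) (fun ω => Y ω i) (fun ω => Z ω i) := by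
  have hYZ := condEnt_telescope (μ := μ) n Y Z
  have hYSZ := condEnt_telescope (μ := μ) n Y (fun ω => (S ω, Z ω))
  have hterm_eq : ∀ i : Fin n, condEnt μ (fun ω => Y ω i)
      (fun ω => ((fun j : Fin n => if (j : ℕ) < (i : ℕ) then some (Y ω j) else none),
        (S ω, Z ω)))
      = condEnt μ (fun ω => Y ω i) (fun ω => (S ω i, Z ω i)) := by
    intro i
    have h1 : condEnt μ (fun ω => Y ω i)
        (fun ω => ((fun j : Fin n => if (j : ℕ) < (i : ℕ) then some (Y ω j) else none),
          (S ω, Z ω)))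
        = condEnt μ (fun ω => Y ω i)
          (fun ω => (((fun j : Fin n => if (j : ℕ) < (i : ℕ) then some (Y ω j) else none),
                      (fun j : Fin n => if j = i then none else some (Z ω j)),
                      (fun j : Fin n => if j = i then none else some (S ω j))),
                     (S ω i, Z ω i))) := by
      apply condEnt_congr_right
      intro ω ω'
      simp only [Prod.mk.injEq]
      constructor
      · rintro ⟨hp, hs, hz⟩
        exact ⟨⟨hp, by rw [hz], by rw [hs]⟩, by rw [hs], by rw [hz]⟩
      · rintro ⟨⟨hp, hzm, hsm⟩, hsi, hzi⟩
        refine ⟨hp, funext fun j => ?_, funext fun j => ?_⟩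
        · by_cases hj : j = i
          · rw [hj]; exact hsi
          · have := congrFun hsm j
            simp only [hj, if_neg, Option.some.injEq, if_false] at this
            exact this
        · by_cases hj : j = i
          · rw [hj]; exact hzi
          · have := congrFun hzm j
            simp only [hj, if_neg, Option.some.injEq, if_false] at this
            exact this
    rw [h1, condEnt_markov hμ (hmc i)]
  have hterm_le : ∀ i : Fin n, condEnt μ (fun ω => Y ω i)
      (fun ω => ((fun j : Fin n => if (j : ℕ) < (i : ℕ) then some (Y ω j) else none), Z ω))
      ≤ condEnt μ (fun ω => Y ω i) (fun ω => Z ω i) := fun i =>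
    condEnt_comp_le hμ (fun ω => Y ω i)
      (fun ω => ((fun j : Fin n => if (j : ℕ) < (i : ℕ) then some (Y ω j) else none), Z ω))
      (fun p => p.2 i)
  rw [cmi_eq S Y Z, hYZ, hYSZ, Finset.sum_congr rfl (fun i _ => hterm_eq i)]
  have hsum_le := Finset.sum_le_sum (fun i (_ : i ∈ Finset.univ) => hterm_le i)
  have hrw : ∀ i : Fin n, cmi μ (fun ω => S ω i) (fun ω => Y ω i) (fun ω => Z ω i)
      = condEnt μ (fun ω => Y ω i) (fun ω => Z ω i)
        - condEnt μ (fun ω => Y ω i) (fun ω => (S ω i, Z ω i)) := fun i =>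
    cmi_eq (fun ω => S ω i) (fun ω => Y ω i) (fun ω => Z ω i)
  rw [Finset.sum_congr rfl (fun i _ => hrw i), Finset.sum_sub_distrib]
  linarith
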